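/- Let G be an ordered groupoid, A a ring, and F the ring of all functions G → A with pointwise operations. For g ∈ G set F_g = {f ∈ F : f(h) = 0 for all h with r(h) ≰ r(g)}, and for f ∈ F_{g⁻¹} define γ_g(f)(h) = f((g⁻¹|r(h))·h) if r(h) ≤ r(g) and 0 otherwise. Then each γ_g : F_{g⁻¹} → F_g is a ring isomorphism with γ_{g⁻¹} = γ_g⁻¹, γ_{gh} = γ_g ∘ γ_h for composable pairs, γ_e = id for identities e, and γ_h = γ_g|_{F_{h⁻¹}} whenever h ≤ g; hence γ = (F_g, γ_g) is an ordered global action of G on F. -/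
import Mathlib


universe u v w

/-- An ordered groupoid: a set with a partial multiplication (given by a total
function `mul` together with a definedness predicate `comp`), inversion, and a
compatible partial order with unique restrictions and corestrictions
(conditions (OG1)-(OG3*)). Identities are the elements `e` with `e⁻¹e = e`;
`d g = g⁻¹g`, `r g = gg⁻¹`. -/
structure OrderedGroupoid (G : Type u) [PartialOrder G] where
  mul : G → G → G
  inv : G → G
  comp : G → G → Prop
  comp_inv_self : ∀ g, comp (inv g) g
  comp_self_inv : ∀ g, comp g (inv g)
  comp_iff : ∀ g h, comp g h ↔ mul (inv g) g = mul h (inv h)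
  assoc : ∀ g h k, comp g h → comp h k → mul (mul g h) k = mul g (mul h k)
  comp_mul_left : ∀ g h k, comp g h → comp h k → comp (mul g h) k
  comp_mul_right : ∀ g h k, comp g h → comp h k → comp g (mul h k)
  id_left : ∀ g, mul (mul g (inv g)) g = g
  id_right : ∀ g, mul g (mul (inv g) g) = g
  inv_inv : ∀ g, inv (inv g) = g
  inv_mul : ∀ g h, comp g h → inv (mul g h) = mul (inv h) (inv g)
  /-- (OG1) -/
  inv_le_inv : ∀ g h, g ≤ h → inv g ≤ inv h
  /-- (OG2) -/
  mul_le_mul : ∀ g h k l, g ≤ h → k ≤ l → comp g k → comp h l → mul g k ≤ mul h l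
  /-- restriction `(g|e)` -/
  rest : G → G → G
  rest_le : ∀ g e, mul (inv e) e = e → e ≤ mul (inv g) g → rest g e ≤ g
  rest_d : ∀ g e, mul (inv e) e = e → e ≤ mul (inv g) g →
    mul (inv (rest g e)) (rest g e) = e
  rest_unique : ∀ g e k, mul (inv e) e = e → e ≤ mul (inv g) g → k ≤ g →
    mul (inv k) k = e → k = rest g e
  /-- corestriction `(e|g)` -/
  corest : G → G → G
  corest_le : ∀ e g, mul (inv e) e = e → e ≤ mul g (inv g) → corest e g ≤ g
  corest_r : ∀ e g, mul (inv e) e = e → e ≤ mul g (inv g) →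
    mul (corest e g) (inv (corest e g)) = e
  corest_unique : ∀ e g k, mul (inv e) e = e → e ≤ mul g (inv g) → k ≤ g →
    mul k (inv k) = e → k = corest e g

namespace OrderedGroupoid

variable {G : Type u} [PartialOrder G]

/-- the domain identity `d g = g⁻¹ g` -/
def d (O : OrderedGroupoid G) (g : G) : G := O.mul (O.inv g) g

/-- the range identity `r g = g g⁻¹` -/
def r (O : OrderedGroupoid G) (g : G) : G := O.mul g (O.inv g)

/-- `e` is an identity of the groupoid -/
def IsId (O : OrderedGroupoid G) (e : G) : Prop := O.d e = e

/-- `m` is the meet of the identities `e` and `f` in the order on identities. -/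
def IsMeet (O : OrderedGroupoid G) (e f m : G) : Prop :=
  O.IsId m ∧ m ≤ e ∧ m ≤ f ∧ ∀ w, O.IsId w → w ≤ e → w ≤ f → w ≤ m

/-- the pseudoproduct `g ∗ h = (g | d g ∧ r h)·(d g ∧ r h | h)`, given a witness `m`
for the meet `d g ∧ r h`. -/
def pseudo (O : OrderedGroupoid G) (g h m : G) : G :=
  O.mul (O.rest g m) (O.corest m h)

/-- `G` is inductive: its identities form a meet semilattice. -/
def Inductive (O : OrderedGroupoid G) : Prop :=
  ∀ e f, O.IsId e → O.IsId f → ∃ m, O.IsMeet e f m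

/-- `G` is pseudoassociative: `(g∗h)∗k` is defined iff `g∗(h∗k)` is. -/
def Pseudoassoc (O : OrderedGroupoid G) : Prop :=
  ∀ g h k,
    (∃ m1 m2, O.IsMeet (O.d g) (O.r h) m1 ∧
      O.IsMeet (O.d (O.pseudo g h m1)) (O.r k) m2) ↔
    (∃ m3 m4, O.IsMeet (O.d h) (O.r k) m3 ∧
      O.IsMeet (O.d g) (O.r (O.pseudo h k m3)) m4)

end OrderedGroupoid

/-- `T` is a (two-sided) ideal of the subring with carrier `R`. -/
def IsIdealIn {A : Type v} [Ring A] (T R : Set A) : Prop :=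
  T ⊆ R ∧ (0 : A) ∈ T ∧ (∀ a b, a ∈ T → b ∈ T → a + b ∈ T) ∧
    (∀ a, a ∈ T → -a ∈ T) ∧ ∀ x a, x ∈ R → a ∈ T → x * a ∈ T ∧ a * x ∈ T

/-- A partial ordered (P.O.) action `α = (A_g, α_g)` of an ordered groupoid `G` on
a ring `A`: ideals `A_{r g} ◁ A`, `A_g ◁ A_{r g}` and ring isomorphisms
`α_g : A_{g⁻¹} → A_g` satisfying (P1)-(P3) and (PO). -/
structure POAction {G : Type u} [PartialOrder G] (O : OrderedGroupoid G)
    (A : Type v) [Ring A] where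
  S : G → Set A
  act : G → A → A
  ideal_r : ∀ g, IsIdealIn (S (O.r g)) Set.univ
  ideal_g : ∀ g, IsIdealIn (S g) (S (O.r g))
  bijOn : ∀ g, Set.BijOn (act g) (S (O.inv g)) (S g)
  map_add : ∀ g a b, a ∈ S (O.inv g) → b ∈ S (O.inv g) →
    act g (a + b) = act g a + act g b
  map_mul : ∀ g a b, a ∈ S (O.inv g) → b ∈ S (O.inv g) →
    act g (a * b) = act g a * act g b
  /-- (P1): `α_e = id` on `A_e` for identities -/
  p1_id : ∀ e, O.IsId e → ∀ a ∈ S e, act e a = a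
  /-- (P1): `A = Σ_e A_e` -/
  p1_sum : AddSubgroup.closure {a : A | ∃ e, O.IsId e ∧ a ∈ S e} = ⊤
  /-- (P2) -/
  p2 : ∀ g h, O.comp g h → ∀ x, x ∈ S (O.inv g) → x ∈ S h →
    act (O.inv h) x ∈ S (O.inv (O.mul g h))
  /-- (P3) -/
  p3 : ∀ g h, O.comp g h → ∀ a, a ∈ S (O.inv h) → act h a ∈ S (O.inv g) →
    act g (act h a) = act (O.mul g h) a
  /-- (PO) -/
  po_subset : ∀ g h, g ≤ h → S g ⊆ S h
  po_act : ∀ g h, g ≤ h → ∀ a ∈ S (O.inv g), act h a = act g a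

namespace POAction

variable {G : Type u} [PartialOrder G] {O : OrderedGroupoid G}
variable {A : Type v} [Ring A]

/-- a global action: `A_g = A_{r g}`. -/
def IsGlobal (α : POAction O A) : Prop := ∀ g, α.S g = α.S (O.r g)

/-- a strong P.O. action: `A_{(e|g)} = A_e ∩ A_g` for identities `e ≤ r g`. -/
def IsStrong (α : POAction O A) : Prop :=
  ∀ g e, O.IsId e → e ≤ O.r g → α.S (O.corest e g) = α.S e ∩ α.S g

end POAction

/-- the set `T` is generated, as an ideal, by a central idempotent. -/
def GenByCentralIdem {A : Type v} [Ring A] (T : Set A) : Prop :=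
  ∃ u : A, (∀ x : A, u * x = x * u) ∧ u * u = u ∧ T = {a : A | u * a = a}

namespace POAction

variable {G : Type u} [PartialOrder G] {O : OrderedGroupoid G}
variable {A : Type v} [Ring A]

/-- `α` is unital: every `A_g` is generated by a central idempotent of `A`. -/
def IsUnital (α : POAction O A) : Prop := ∀ g, GenByCentralIdem (α.S g)

/-- `α` is preunital: every `A_e`, `e` an identity, is generated by a central
idempotent of `A`. -/
def Preunital (α : POAction O A) : Prop :=
  ∀ e, O.IsId e → GenByCentralIdem (α.S e)

end POAction

/-- Equivalence of two P.O. actions of `G` (on rings `A` and `C`): a family of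
ring isomorphisms `φ_e : A_e → C_e` with `φ_{r g}(A_g) = C_g` and
`φ_{r g} ∘ α_g = γ_g ∘ φ_{d g}` on `A_{g⁻¹}`. -/
def POAction.Equivalent {G : Type u} [PartialOrder G] {O : OrderedGroupoid G}
    {A : Type v} [Ring A] {C : Type w} [Ring C]
    (α : POAction O A) (γ : POAction O C) : Prop :=
  ∃ φ : G → A → C,
    (∀ e, O.IsId e → Set.BijOn (φ e) (α.S e) (γ.S e) ∧
      ∀ a b, a ∈ α.S e → b ∈ α.S e →
        φ e (a + b) = φ e a + φ e b ∧ φ e (a * b) = φ e a * φ e b) ∧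
    (∀ g, φ (O.r g) '' α.S g = γ.S g) ∧
    ∀ g a, a ∈ α.S (O.inv g) → φ (O.r g) (α.act g a) = γ.act g (φ (O.d g) a)

/-- An (ordered) globalization of a P.O. action `α` of `G` on `A`: an ordered
global action `β` of `G` on a ring `B` together with ring monomorphisms
`φ_e : A_e → B_e` satisfying conditions (i)-(iv). -/
structure Globalization {G : Type u} [PartialOrder G] (O : OrderedGroupoid G)
    {A : Type v} [Ring A] (α : POAction O A) where
  B : Type v
  [ringB : Ring B]
  β : POAction O B
  global : β.IsGlobal
  φ : G → A → B
  φ_inj : ∀ e, O.IsId e → Set.InjOn (φ e) (α.S e)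
  φ_hom : ∀ e, O.IsId e → ∀ a b, a ∈ α.S e → b ∈ α.S e →
    φ e (a + b) = φ e a + φ e b ∧ φ e (a * b) = φ e a * φ e b
  /-- (i): `φ_e(A_e)` is an ideal of `B_e` -/
  cond_i : ∀ e, O.IsId e → IsIdealIn (φ e '' α.S e) (β.S e)
  /-- (ii) -/
  cond_ii : ∀ g, φ (O.r g) '' α.S g =
    (φ (O.r g) '' α.S (O.r g)) ∩ (β.act g '' (φ (O.d g) '' α.S (O.d g)))
  /-- (iii) -/
  cond_iii : ∀ g a, a ∈ α.S (O.inv g) →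
    β.act g (φ (O.d g) a) = φ (O.r g) (α.act g a)
  /-- (iv): `B_g = Σ_{r h ≤ r g} β_h(φ_{d h}(A_{d h}))` -/
  cond_iv : ∀ g, β.S g = ↑(AddSubgroup.closure
    {b : B | ∃ h, O.r h ≤ O.r g ∧ ∃ a ∈ α.S (O.d h), b = β.act h (φ (O.d h) a)})

namespace Globalization

variable {G : Type u} [PartialOrder G] {O : OrderedGroupoid G}
variable {A : Type v} [Ring A] {α : POAction O A}

attribute [instance] Globalization.ringB

/-- a minimal globalization: `B_g = Σ_{r h = r g} β_h(φ_{d h}(A_{d h}))`. -/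
def IsMinimal (Γ : Globalization O α) : Prop :=
  ∀ g, Γ.β.S g = ↑(AddSubgroup.closure
    {b : Γ.B | ∃ h, O.r h = O.r g ∧ ∃ a ∈ α.S (O.d h), b = Γ.β.act h (Γ.φ (O.d h) a)})

/-- two globalizations are equivalent when the underlying global actions are
equivalent P.O. actions. -/
def Equiv (Γ Γ' : Globalization O α) : Prop := Γ.β.Equivalent Γ'.β

end Globalization

/-- `F_g = {f ∈ F(G,A) : f h = 0 whenever r h ≰ r g}`. -/
def Fset {G : Type u} [PartialOrder G] (O : OrderedGroupoid G)
    (A : Type v) [Ring A] (g : G) : Set (G → A) :=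
  {f | ∀ h, ¬ O.r h ≤ O.r g → f h = 0}

open Classical in
/-- `γ_g(f)(h) = f((g⁻¹|r h)·h)` if `r h ≤ r g`, and `0` otherwise. -/
noncomputable def gammaFun {G : Type u} [PartialOrder G] (O : OrderedGroupoid G)
    (A : Type v) [Ring A] (g : G) (f : G → A) : G → A :=
  fun h => if O.r h ≤ O.r g then f (O.mul (O.rest (O.inv g) (O.r h)) h) else 0

namespace OrderedGroupoid

variable {G : Type u} [PartialOrder G] (O : OrderedGroupoid G)

lemma r_inv' (g : G) : O.r (O.inv g) = O.d g := by
  show O.mul (O.inv g) (O.inv (O.inv g)) = O.mul (O.inv g) g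
  rw [O.inv_inv]

lemma d_inv' (g : G) : O.d (O.inv g) = O.r g := by
  show O.mul (O.inv (O.inv g)) (O.inv g) = O.mul g (O.inv g)
  rw [O.inv_inv]

lemma inv_r' (g : G) : O.inv (O.r g) = O.r g := by
  show O.inv (O.mul g (O.inv g)) = _
  rw [O.inv_mul g (O.inv g) (O.comp_self_inv g), O.inv_inv]
  rfl

lemma id_left' (g : G) : O.mul (O.r g) g = g := O.id_left g

lemma id_right' (g : G) : O.mul g (O.d g) = g := O.id_right g

lemma comp_r_self (g : G) : O.comp (O.r g) g :=
  O.comp_mul_left g (O.inv g) g (O.comp_self_inv g) (O.comp_inv_self g)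

lemma isId_r' (g : G) : O.IsId (O.r g) := by
  show O.d (O.r g) = O.r g
  have h1 := O.assoc (O.r g) g (O.inv g) (O.comp_r_self g) (O.comp_self_inv g)
  rw [O.id_left' g] at h1
  show O.mul (O.inv (O.r g)) (O.r g) = O.r g
  rw [O.inv_r']
  exact h1.symm

lemma r_r' (g : G) : O.r (O.r g) = O.r g := by
  have h := O.isId_r' g
  show O.mul (O.r g) (O.inv (O.r g)) = O.r g
  rw [O.inv_r']
  have h1 := O.assoc (O.r g) g (O.inv g) (O.comp_r_self g) (O.comp_self_inv g)
  rw [O.id_left' g] at h1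
  exact h1.symm

lemma r_mono (g h : G) (hle : g ≤ h) : O.r g ≤ O.r h :=
  O.mul_le_mul g h (O.inv g) (O.inv h) hle (O.inv_le_inv g h hle)
    (O.comp_self_inv g) (O.comp_self_inv h)

lemma d_mono (g h : G) (hle : g ≤ h) : O.d g ≤ O.d h :=
  O.mul_le_mul (O.inv g) (O.inv h) g h (O.inv_le_inv g h hle) hle
    (O.comp_inv_self g) (O.comp_inv_self h)

lemma comp_inv_inv (g h : G) (hc : O.comp g h) : O.comp (O.inv h) (O.inv g) := by
  rw [O.comp_iff]
  show O.d (O.inv h) = O.r (O.inv g)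
  rw [O.d_inv', O.r_inv']
  exact ((O.comp_iff g h).mp hc).symm

lemma r_mul' (g h : G) (hc : O.comp g h) : O.r (O.mul g h) = O.r g := by
  have hinv : O.inv (O.mul g h) = O.mul (O.inv h) (O.inv g) := O.inv_mul g h hc
  show O.mul (O.mul g h) (O.inv (O.mul g h)) = O.mul g (O.inv g)
  rw [hinv]
  have c1 : O.comp (O.inv h) (O.inv g) := O.comp_inv_inv g h hc
  have c2 : O.comp h (O.mul (O.inv h) (O.inv g)) :=
    O.comp_mul_right h (O.inv h) (O.inv g) (O.comp_self_inv h) c1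
  rw [O.assoc g h _ hc c2]
  have h3 : O.mul h (O.mul (O.inv h) (O.inv g)) = O.inv g := by
    rw [← O.assoc h (O.inv h) (O.inv g) (O.comp_self_inv h) c1]
    have hd : O.mul (O.inv g) g = O.mul h (O.inv h) := (O.comp_iff g h).mp hc
    rw [← hd]
    have h4 := O.id_left (O.inv g)
    rw [O.inv_inv] at h4
    exact h4
  rw [h3]

lemma d_mul' (g h : G) (hc : O.comp g h) : O.d (O.mul g h) = O.d h := by
  rw [← O.r_inv' (O.mul g h), O.inv_mul g h hc,
    O.r_mul' _ _ (O.comp_inv_inv g h hc), O.r_inv']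

lemma inv_e (e : G) (hId : O.IsId e) : O.inv e = e := by
  have he : O.mul (O.inv e) e = e := hId
  calc O.inv e = O.inv (O.mul (O.inv e) e) := by rw [he]
    _ = O.mul (O.inv e) (O.inv (O.inv e)) := O.inv_mul _ _ (O.comp_inv_self e)
    _ = O.mul (O.inv e) e := by rw [O.inv_inv]
    _ = e := he

lemma r_e (e : G) (hId : O.IsId e) : O.r e = e := by
  have he : O.d e = e := hId
  calc O.r e = O.r (O.d e) := by rw [he]
    _ = O.r (O.inv e) := O.r_mul' _ _ (O.comp_inv_self e)
    _ = O.d e := O.r_inv' e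
    _ = e := he

end OrderedGroupoid

section Gamma

variable {G : Type u} [PartialOrder G] (O : OrderedGroupoid G)
variable (A : Type v) [Ring A]

open Classical in
lemma gammaFun_pos (g : G) (f : G → A) (t : G) (h : O.r t ≤ O.r g) :
    gammaFun O A g f t = f (O.mul (O.rest (O.inv g) (O.r t)) t) := if_pos h

open Classical in
lemma gammaFun_neg (g : G) (f : G → A) (t : G) (h : ¬ O.r t ≤ O.r g) :
    gammaFun O A g f t = 0 := if_neg h

lemma gamma_mem (g : G) (f : G → A) : gammaFun O A g f ∈ Fset O A g :=
  fun t ht => gammaFun_neg O A g f t ht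

/-- the key restriction element `k = (g⁻¹ | r t)` for `r t ≤ r g`. -/
lemma key (g t : G) (hle : O.r t ≤ O.r g) :
    O.rest (O.inv g) (O.r t) ≤ O.inv g ∧
    O.d (O.rest (O.inv g) (O.r t)) = O.r t ∧
    O.comp (O.rest (O.inv g) (O.r t)) t ∧
    O.r (O.mul (O.rest (O.inv g) (O.r t)) t) = O.r (O.rest (O.inv g) (O.r t)) ∧
    O.r (O.rest (O.inv g) (O.r t)) ≤ O.d g := by
  have hId : O.IsId (O.r t) := O.isId_r' t
  have hle1 : O.r t ≤ O.d (O.inv g) := by rw [O.d_inv']; exact hle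
  have h1 : O.rest (O.inv g) (O.r t) ≤ O.inv g := O.rest_le (O.inv g) (O.r t) hId hle1
  have h2 : O.d (O.rest (O.inv g) (O.r t)) = O.r t := O.rest_d (O.inv g) (O.r t) hId hle1
  have h3 : O.comp (O.rest (O.inv g) (O.r t)) t := (O.comp_iff _ t).mpr h2
  refine ⟨h1, h2, h3, O.r_mul' _ t h3, ?_⟩
  have := O.r_mono _ _ h1
  rwa [O.r_inv'] at this

lemma gamma_inv_gamma (g : G) :
    ∀ f ∈ Fset O A (O.inv g), gammaFun O A (O.inv g) (gammaFun O A g f) = f := by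
  intro f hf
  funext t
  by_cases hle : O.r t ≤ O.r (O.inv g)
  · rw [gammaFun_pos O A (O.inv g) _ t hle]
    obtain ⟨hk_le, hk_d, hkt, hrkt, hrk⟩ := key O (O.inv g) t hle
    rw [O.inv_inv] at hk_le hk_d hkt hrkt hrk ⊢
    set k := O.rest g (O.r t) with hkdef
    rw [O.d_inv'] at hrk
    rw [gammaFun_pos O A g _ _ (by rw [hrkt]; exact hrk)]
    have hrest : O.inv k = O.rest (O.inv g) (O.r k) :=
      O.rest_unique (O.inv g) (O.r k) (O.inv k) (O.isId_r' k)
        (by show O.r k ≤ O.d (O.inv g); rw [O.d_inv']; exact hrk)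
        (O.inv_le_inv k g hk_le) (O.d_inv' k)
    rw [hrkt, ← hrest, ← O.assoc (O.inv k) k t (O.comp_inv_self k) hkt]
    have heq : O.mul (O.mul (O.inv k) k) t = t := by
      rw [show O.mul (O.inv k) k = O.r t from hk_d]
      exact O.id_left' t
    rw [heq]
  · rw [gammaFun_neg O A (O.inv g) _ t hle]
    exact (hf t hle).symm

lemma gamma_comp (g h : G) (hc : O.comp g h) (f : G → A) :
    gammaFun O A (O.mul g h) f = gammaFun O A g (gammaFun O A h f) := by
  have hdg : O.d g = O.r h := (O.comp_iff g h).mp hc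
  have hrgh : O.r (O.mul g h) = O.r g := O.r_mul' g h hc
  funext t
  by_cases hle : O.r t ≤ O.r g
  · obtain ⟨hk_le, hk_d, hkt, hrkt, hrk⟩ := key O g t hle
    set k := O.rest (O.inv g) (O.r t) with hkdef
    have hrk' : O.r k ≤ O.r h := by rw [← hdg]; exact hrk
    obtain ⟨hm_le, hm_d, -, -, -⟩ := key O h (O.r k) (by rw [O.r_r']; exact hrk')
    rw [O.r_r'] at hm_le hm_d
    set m := O.rest (O.inv h) (O.r k) with hmdef
    have hmk : O.comp m k := (O.comp_iff m k).mpr hm_d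
    have hcomp_hg : O.comp (O.inv h) (O.inv g) := O.comp_inv_inv g h hc
    have hmk_le : O.mul m k ≤ O.inv (O.mul g h) := by
      rw [O.inv_mul g h hc]
      exact O.mul_le_mul m (O.inv h) k (O.inv g) hm_le hk_le hmk hcomp_hg
    have hmk_d : O.d (O.mul m k) = O.r t := by rw [O.d_mul' m k hmk]; exact hk_d
    have hrest_eq : O.mul m k = O.rest (O.inv (O.mul g h)) (O.r t) :=
      O.rest_unique (O.inv (O.mul g h)) (O.r t) (O.mul m k) (O.isId_r' t)
        (by show O.r t ≤ O.d (O.inv (O.mul g h)); rw [O.d_inv', hrgh]; exact hle)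
        hmk_le hmk_d
    rw [gammaFun_pos O A (O.mul g h) f t (by rw [hrgh]; exact hle),
      gammaFun_pos O A g _ t hle,
      gammaFun_pos O A h f _ (by rw [hrkt]; exact hrk')]
    rw [hrkt, ← hrest_eq, O.assoc m k t hmk hkt]
  · rw [gammaFun_neg O A (O.mul g h) f t (by rw [hrgh]; exact hle),
      gammaFun_neg O A g _ t hle]

lemma gamma_id (e : G) (hId : O.IsId e) (f : G → A) (hf : f ∈ Fset O A e) :
    gammaFun O A e f = f := by
  have hre : O.r e = e := O.r_e e hId
  have hinv : O.inv e = e := O.inv_e e hId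
  funext t
  by_cases h1 : O.r t ≤ O.r e
  · rw [gammaFun_pos O A e f t h1, hinv]
    have h1' : O.r t ≤ e := by rwa [hre] at h1
    have hrest : O.r t = O.rest e (O.r t) :=
      O.rest_unique e (O.r t) (O.r t) (O.isId_r' t)
        (by show O.r t ≤ O.d e; rw [show O.d e = e from hId]; exact h1')
        h1' (O.isId_r' t)
    rw [← hrest, O.id_left' t]
  · rw [gammaFun_neg O A e f t h1]
    exact (hf t h1).symm

lemma gamma_restrict (g h : G) (hle : h ≤ g) (f : G → A) (hf : f ∈ Fset O A (O.inv h)) :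
    gammaFun O A g f = gammaFun O A h f := by
  have hr : O.r h ≤ O.r g := O.r_mono h g hle
  funext t
  by_cases h1 : O.r t ≤ O.r h
  · obtain ⟨hk_le, hk_d, -, -, -⟩ := key O h t h1
    have hrest : O.rest (O.inv h) (O.r t) = O.rest (O.inv g) (O.r t) :=
      O.rest_unique (O.inv g) (O.r t) _ (O.isId_r' t)
        (by show O.r t ≤ O.d (O.inv g); rw [O.d_inv']; exact le_trans h1 hr)
        (le_trans hk_le (O.inv_le_inv h g hle)) hk_d
    rw [gammaFun_pos O A g f t (le_trans h1 hr), gammaFun_pos O A h f t h1, hrest]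
  · by_cases h2 : O.r t ≤ O.r g
    · obtain ⟨hk_le, hk_d, hkt, hrkt, hrk⟩ := key O g t h2
      set k := O.rest (O.inv g) (O.r t) with hkdef
      rw [gammaFun_pos O A g f t h2, gammaFun_neg O A h f t h1]
      apply hf
      rw [hrkt, O.r_inv']
      intro hcon
      -- hcon : O.r k ≤ O.d h; derive contradiction with h1
      have hIdk : O.IsId (O.r k) := O.isId_r' k
      have hk_rle : O.r k ≤ O.r (O.inv g) := O.r_mono k (O.inv g) hk_le
      have e1 : k = O.corest (O.r k) (O.inv g) :=
        O.corest_unique (O.r k) (O.inv g) k hIdk hk_rle hk_le rfl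
      have hconr : O.r k ≤ O.r (O.inv h) := by rw [O.r_inv']; exact hcon
      have hl_le : O.corest (O.r k) (O.inv h) ≤ O.inv h :=
        O.corest_le (O.r k) (O.inv h) hIdk hconr
      have hl_r : O.mul (O.corest (O.r k) (O.inv h)) (O.inv (O.corest (O.r k) (O.inv h)))
          = O.r k := O.corest_r (O.r k) (O.inv h) hIdk hconr
      have e2 : O.corest (O.r k) (O.inv h) = O.corest (O.r k) (O.inv g) :=
        O.corest_unique (O.r k) (O.inv g) _ hIdk hk_rle
          (le_trans hl_le (O.inv_le_inv h g hle)) hl_r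
      have hkh : k ≤ O.inv h := by rw [e1, ← e2]; exact hl_le
      have hdk : O.d k ≤ O.d (O.inv h) := O.d_mono k (O.inv h) hkh
      rw [O.d_inv', hk_d] at hdk
      exact h1 hdk
    · rw [gammaFun_neg O A g f t h2, gammaFun_neg O A h f t h1]

end Gamma


/-- the family `γ = (F_g, γ_g)` is an ordered global action of `G`
on the function ring `F = F(G,A)`: each `γ_g : F_{g⁻¹} → F_g` is a ring
isomorphism, `γ_{g⁻¹} = γ_g⁻¹`, `γ_{gh} = γ_g ∘ γ_h` on composable pairs,
`γ_e = id` for identities, and `γ_h = γ_g|_{F_{h⁻¹}}` whenever `h ≤ g`. -/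
theorem stmt11 {G : Type u} [PartialOrder G] (O : OrderedGroupoid G)
    (A : Type v) [Ring A] :
    (∀ g : G, Fset O A g = Fset O A (O.r g)) ∧
    (∀ g : G, IsIdealIn (Fset O A g) (Set.univ : Set (G → A))) ∧
    (∀ g : G, Set.BijOn (gammaFun O A g) (Fset O A (O.inv g)) (Fset O A g)) ∧
    (∀ (g : G) (f f' : G → A), f ∈ Fset O A (O.inv g) → f' ∈ Fset O A (O.inv g) →
      gammaFun O A g (f + f') = gammaFun O A g f + gammaFun O A g f' ∧
      gammaFun O A g (f * f') = gammaFun O A g f * gammaFun O A g f') ∧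
    (∀ (g : G), (∀ f ∈ Fset O A (O.inv g), gammaFun O A (O.inv g) (gammaFun O A g f) = f) ∧
      ∀ f ∈ Fset O A g, gammaFun O A g (gammaFun O A (O.inv g) f) = f) ∧
    (∀ g h : G, O.comp g h → ∀ f ∈ Fset O A (O.inv h),
      gammaFun O A (O.mul g h) f = gammaFun O A g (gammaFun O A h f)) ∧
    (∀ e : G, O.IsId e → ∀ f ∈ Fset O A e, gammaFun O A e f = f) ∧
    (∀ g h : G, h ≤ g → Fset O A h ⊆ Fset O A g ∧
      ∀ f ∈ Fset O A (O.inv h), gammaFun O A g f = gammaFun O A h f) := by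
  refine ⟨?_, ?_, ?_, ?_, ?_, ?_, ?_, ?_⟩
  · intro g; unfold Fset; rw [O.r_r']
  · intro g
    refine ⟨fun _ _ => trivial, fun t ht => rfl, ?_, ?_, ?_⟩
    · intro a b ha hb t ht; show a t + b t = 0; rw [ha t ht, hb t ht, add_zero]
    · intro a ha t ht; show -(a t) = 0; rw [ha t ht, neg_zero]
    · intro x a _ ha
      exact ⟨fun t ht => by show x t * a t = 0; rw [ha t ht, mul_zero],
        fun t ht => by show a t * x t = 0; rw [ha t ht, zero_mul]⟩
  · intro g
    have inv2 : ∀ f ∈ Fset O A g, gammaFun O A g (gammaFun O A (O.inv g) f) = f := by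
      have := gamma_inv_gamma O A (O.inv g); rwa [O.inv_inv] at this
    exact Set.InvOn.bijOn ⟨gamma_inv_gamma O A g, inv2⟩
      (fun f _ => gamma_mem O A g f) (fun f _ => gamma_mem O A (O.inv g) f)
  · intro g f f' _ _
    constructor <;> funext t <;> by_cases h : O.r t ≤ O.r g
    · rw [Pi.add_apply, gammaFun_pos O A g _ t h, gammaFun_pos O A g f t h,
        gammaFun_pos O A g f' t h, Pi.add_apply]
    · rw [Pi.add_apply, gammaFun_neg O A g _ t h, gammaFun_neg O A g f t h,
        gammaFun_neg O A g f' t h, add_zero]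
    · rw [Pi.mul_apply, gammaFun_pos O A g _ t h, gammaFun_pos O A g f t h,
        gammaFun_pos O A g f' t h, Pi.mul_apply]
    · rw [Pi.mul_apply, gammaFun_neg O A g _ t h, gammaFun_neg O A g f t h,
        gammaFun_neg O A g f' t h, mul_zero]
  · intro g
    refine ⟨gamma_inv_gamma O A g, ?_⟩
    have := gamma_inv_gamma O A (O.inv g); rwa [O.inv_inv] at this
  · intro g h hc f _; exact gamma_comp O A g h hc f
  · exact gamma_id O A
  · intro g h hle
    exact ⟨fun f hf t ht => hf t (fun hcon => ht (le_trans hcon (O.r_mono h g hle))),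
      fun f hf => gamma_restrict O A g h hle f hf⟩
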